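/- Let (α, ξ) and (β, ν) be σ-finite measure spaces and let p : α → β be measurable. Let π, q : α → ℝ≥0 be measurable with π(θ) = 0 for ξ-almost every θ with q(θ) = 0. Let g : β → ℝ≥0 be measurable such that the pushforward of ξ.withDensity π under p equals ν.withDensity g, and let f : β → ℝ≥0 be measurable with f(x) = 0 for ν-almost every x with g(x) = 0. Then the pushforward under p of the measure (ξ.withDensity q).withDensity (θ ↦ (π(θ)/q(θ)) · (f(p(θ))/g(p(θ)))) equals ν.withDensity f. -/

import Mathlib

open MeasureTheory
open scoped ENNReal NNReal

lemma map_withDensity_comp {α β : Type*} [MeasurableSpace α] [MeasurableSpace β]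
    (μ : Measure α) (p : α → β) (hp : Measurable p) (h : β → ℝ≥0∞) (hh : Measurable h) :
    Measure.map p (μ.withDensity (fun θ => h (p θ))) = (Measure.map p μ).withDensity h := by
  ext s hs
  rw [Measure.map_apply hp hs, withDensity_apply _ (hp hs), withDensity_apply _ hs,
    MeasureTheory.setLIntegral_map hs hh hp]

/-- Correctness of the full two-step weighting scheme: draws from the proposal
(density `q` w.r.t. `ξ`) reweighted first by the importance weights `pri/q`
(prior over proposal) and then by the Radon–Nikodym ratio `f/g` evaluated at
the simulated prevalence `p θ` push forward to the target measure
`ν.withDensity f`.  Division in `ℝ≥0` satisfies `x / 0 = 0`. -/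
theorem two_step_weighting
    {α β : Type*} [MeasurableSpace α] [MeasurableSpace β]
    (ξ : Measure α) (ν : Measure β) [SigmaFinite ξ] [SigmaFinite ν]
    (p : α → β) (hp : Measurable p)
    (pri q : α → ℝ≥0) (hpri : Measurable pri) (hq : Measurable q)
    (hpq : ∀ᵐ θ ∂ξ, q θ = 0 → pri θ = 0)
    (g : β → ℝ≥0) (hg : Measurable g)
    (hpush : Measure.map p (ξ.withDensity (fun θ => (pri θ : ℝ≥0∞)))
      = ν.withDensity (fun x => (g x : ℝ≥0∞)))
    (f : β → ℝ≥0) (hf : Measurable f)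
    (habs : ∀ᵐ x ∂ν, g x = 0 → f x = 0) :
    Measure.map p
        ((ξ.withDensity (fun θ => (q θ : ℝ≥0∞))).withDensity
          (fun θ => ((pri θ / q θ * (f (p θ) / g (p θ)) : ℝ≥0) : ℝ≥0∞)))
      = ν.withDensity (fun x => (f x : ℝ≥0∞)) := by
  have hmeas1 : Measurable (fun θ => ((pri θ / q θ * (f (p θ) / g (p θ)) : ℝ≥0) : ℝ≥0∞)) :=
    (((hpri.div hq).mul ((hf.comp hp).div (hg.comp hp)))).coe_nnreal_ennreal
  rw [← withDensity_mul ξ (hq.coe_nnreal_ennreal) hmeas1]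
  simp only [Pi.mul_def]
  have h1 : (fun θ => (q θ : ℝ≥0∞) * ((pri θ / q θ * (f (p θ) / g (p θ)) : ℝ≥0) : ℝ≥0∞))
      =ᵐ[ξ] fun θ => (pri θ : ℝ≥0∞) * ((f (p θ) / g (p θ) : ℝ≥0) : ℝ≥0∞) := by
    filter_upwards [hpq] with θ hθ
    rcases eq_or_ne (q θ) 0 with h0 | h0
    · simp [h0, hθ h0]
    · push_cast
      rw [← mul_assoc]
      congr 1
      rw [ENNReal.coe_div h0, ENNReal.mul_div_cancel (by exact_mod_cast h0) ENNReal.coe_ne_top]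
  have hm2 : Measurable (fun θ => ((f (p θ) / g (p θ) : ℝ≥0) : ℝ≥0∞)) :=
    ((hf.comp hp).div (hg.comp hp)).coe_nnreal_ennreal
  rw [withDensity_congr_ae h1,
    show (fun θ => (pri θ : ℝ≥0∞) * ((f (p θ) / g (p θ) : ℝ≥0) : ℝ≥0∞))
      = (fun θ => (pri θ : ℝ≥0∞)) * (fun θ => ((f (p θ) / g (p θ) : ℝ≥0) : ℝ≥0∞)) from rfl,
    withDensity_mul ξ hpri.coe_nnreal_ennreal hm2,
    map_withDensity_comp _ p hp _ (show Measurable (fun x => ((f x / g x : ℝ≥0) : ℝ≥0∞)) from (hf.div hg).coe_nnreal_ennreal), hpush,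
    ← withDensity_mul ν hg.coe_nnreal_ennreal (show Measurable (fun x => ((f x / g x : ℝ≥0) : ℝ≥0∞)) from (hf.div hg).coe_nnreal_ennreal)]
  simp only [Pi.mul_def]
  apply withDensity_congr_ae
  filter_upwards [habs] with x hx
  rcases eq_or_ne (g x) 0 with h0 | h0
  · simp [h0, hx h0]
  · rw [ENNReal.coe_div h0, ENNReal.mul_div_cancel (by exact_mod_cast h0) ENNReal.coe_ne_top]
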